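/- arXiv:1810.01819 — 2 statements merged into one kernel-verified Lean document; each statement's English description precedes it below -/
import Mathlib

section
/- Let n ≥ 3 be an odd integer, let m ≥ 2 be an integer, and let x, y be integers with y ≥ 1 satisfying x^n − m·y^n = 1 or x^n − m·y^n = −1. Then |m^{1/n} − x/y| ≤ 1/(c₁·y^n), where c₁ = m^{(n−1)/n}·c₂ and c₂ = ∏_{j=1}^{n−1} |sin(2πj/n)|. -/
/-!
Put `α = m^{1/n}` and `ζ = e^{2πi/n}`. Over `ℂ`, `x^n - (αy)^n = ∏_{j<n} (x - ζ^j αy)` has absolute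
value `1`. The factor `j = 0` is `x - αy`, and for `j ≥ 1` the factor is at least its imaginary part
`αy |sin(2πj/n)|` in absolute value, which is nonzero because `n` is odd. Hence
`|x - αy| (αy)^{n-1} c₂ ≤ 1`, and dividing by `y` gives the bound.
-/

open Finset Complex

/-- The constant `c₂` of the statement. -/
noncomputable def sineProduct (n : ℕ) : ℝ :=
  ∏ j ∈ Icc 1 (n - 1), |Real.sin (2 * Real.pi * (j : ℝ) / n)|

lemma sin_two_pi_mul_div_ne_zero {n j : ℕ} (hn : Odd n) (hj : 0 < j) (hjn : j < n) :
    Real.sin (2 * Real.pi * j / n) ≠ 0 := by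
  rw [Real.sin_ne_zero_iff]
  intro k hk
  have hkn : k * n = 2 * (j : ℤ) := by
    have hn0 : (n : ℝ) ≠ 0 := by exact_mod_cast hn.pos.ne'
    field_simp at hk
    exact_mod_cast hk
  have h2j : n ∣ 2 * j := Int.natCast_dvd_natCast.mp ⟨k, by push_cast; linarith⟩
  have hnj : n ∣ j := (Nat.coprime_two_right.mpr hn).dvd_of_dvd_mul_left h2j
  exact absurd (Nat.le_of_dvd hj hnj) (by omega)

lemma sineProduct_pos {n : ℕ} (hn : Odd n) : 0 < sineProduct n :=
  prod_pos fun j hj ↦ by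
    obtain ⟨hj1, hjn⟩ := mem_Icc.mp hj
    exact abs_pos.mpr (sin_two_pi_mul_div_ne_zero hn hj1 (by omega))

lemma abs_mul_abs_sin_le_norm_sub_exp_mul (a b θ : ℝ) :
    |b| * |Real.sin θ| ≤ ‖(a : ℂ) - exp (θ * I) * b‖ :=
  calc |b| * |Real.sin θ| = |((a : ℂ) - exp (θ * I) * b).im| := by
        simp only [sub_im, mul_im, exp_ofReal_mul_I_re, exp_ofReal_mul_I_im, ofReal_re, ofReal_im]
        simp [abs_mul, mul_comm]
    _ ≤ ‖(a : ℂ) - exp (θ * I) * b‖ := abs_im_le_norm _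

lemma abs_sub_mul_pow_mul_sineProduct_le_abs_pow_sub_pow {n : ℕ} (hn : 0 < n) (a b : ℝ) :
    |a - b| * (|b| ^ (n - 1) * sineProduct n) ≤ |a ^ n - b ^ n| := by
  set ζ : ℂ := exp (2 * Real.pi * I / n)
  have hfactor : ((a ^ n - b ^ n : ℝ) : ℂ) = ∏ j ∈ range n, ((a : ℂ) - ζ ^ j * b) := by
    have := congrArg (Polynomial.eval (a : ℂ))
      (X_pow_sub_C_eq_prod (isPrimitiveRoot_exp n hn.ne') hn (rfl : (b : ℂ) ^ n = _))
    simpa [Polynomial.eval_prod] using this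
  have hzeta (j : ℕ) : ζ ^ j = exp ((2 * Real.pi * j / n : ℝ) * I) := by
    rw [← exp_nat_mul]; push_cast; ring_nf
  have hIcc : Icc 1 (n - 1) = Ico 1 n := by ext; simp only [mem_Icc, mem_Ico]; omega
  calc |a - b| * (|b| ^ (n - 1) * sineProduct n)
      = |a - b| * ∏ j ∈ Ico 1 n, |b| * |Real.sin (2 * Real.pi * j / n)| := by
        rw [sineProduct, prod_mul_distrib, prod_const, hIcc, Nat.card_Ico]
    _ ≤ ‖(a : ℂ) - ζ ^ 0 * b‖ * ∏ j ∈ Ico 1 n, ‖(a : ℂ) - ζ ^ j * b‖ := by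
        gcongr with j
        · simp [← ofReal_sub, Complex.norm_real]
        · rw [hzeta]; exact abs_mul_abs_sin_le_norm_sub_exp_mul _ _ _
    _ = ‖∏ j ∈ range n, ((a : ℂ) - ζ ^ j * b)‖ := by
        rw [norm_prod, range_eq_Ico, prod_eq_prod_Ico_succ_bot hn]
    _ = |a ^ n - b ^ n| := by rw [← hfactor, Complex.norm_real, Real.norm_eq_abs]

theorem stmt_2_general (n : ℕ) (hodd : Odd n) (m : ℤ) (hm : 2 ≤ m)
    (x y : ℤ) (hy : 1 ≤ y)
    (h : x ^ n - m * y ^ n = 1 ∨ x ^ n - m * y ^ n = -1) :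
    |(m : ℝ) ^ ((1 : ℝ) / n) - (x : ℝ) / (y : ℝ)| ≤
      1 / (((m : ℝ) ^ (((n : ℝ) - 1) / n) *
        ∏ j ∈ Finset.Icc 1 (n - 1), |Real.sin (2 * Real.pi * (j : ℝ) / n)|) *
        (y : ℝ) ^ n) := by
  have hm0 : (0 : ℝ) < m := by exact_mod_cast (by omega : (0 : ℤ) < m)
  have hy0 : (0 : ℝ) < y := by exact_mod_cast (by omega : (0 : ℤ) < y)
  set α : ℝ := (m : ℝ) ^ ((1 : ℝ) / n)
  have hαn : α ^ n = m := by
    simpa only [α, one_div] using Real.rpow_inv_natCast_pow hm0.le hodd.pos.ne'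
  have hαn1 : (m : ℝ) ^ (((n : ℝ) - 1) / n) = α ^ (n - 1) := by
    rw [← Real.rpow_natCast, ← Real.rpow_mul hm0.le, Nat.cast_sub hodd.pos]
    ring_nf
  have hunit : |(x : ℝ) ^ n - (α * y) ^ n| = 1 := by
    have hcast : (x : ℝ) ^ n - m * y ^ n = ((x ^ n - m * y ^ n : ℤ) : ℝ) := by push_cast; ring
    rw [mul_pow, hαn, hcast]
    rcases h with h | h <;> simp [h]
  have hbound := abs_sub_mul_pow_mul_sineProduct_le_abs_pow_sub_pow hodd.pos x (α * y)
  rw [hunit, abs_of_pos (show 0 < α * y by positivity)] at hbound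
  change _ ≤ 1 / (_ * sineProduct n * _)
  rw [hαn1, le_div_iff₀ (mul_pos (mul_pos (by positivity) (sineProduct_pos hodd)) (by positivity))]
  calc |α - x / y| * (α ^ (n - 1) * sineProduct n * y ^ n)
      = |x - α * y| * ((α * y) ^ (n - 1) * sineProduct n) := by
        rw [← pow_sub_one_mul hodd.pos.ne' (y : ℝ), show α - x / y = -((x - α * y) / y) by
          field_simp; ring, abs_neg, abs_div, abs_of_pos hy0]
        field_simp
        ring
    _ ≤ 1 := hbound

/-- For an odd integer `n ≥ 3`, an integer `m ≥ 2`, and integers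
`x, y` with `y ≥ 1` satisfying `x^n − m·y^n = ±1`, one has
`|m^{1/n} − x/y| ≤ 1/(c₁·y^n)` with `c₁ = m^{(n−1)/n}·∏_{j=1}^{n−1}|sin(2πj/n)|`. -/
theorem stmt_2 (n : ℕ) (hn : 3 ≤ n) (hodd : Odd n) (m : ℤ) (hm : 2 ≤ m)
    (x y : ℤ) (hy : 1 ≤ y)
    (h : x ^ n - m * y ^ n = 1 ∨ x ^ n - m * y ^ n = -1) :
    |(m : ℝ) ^ ((1 : ℝ) / n) - (x : ℝ) / (y : ℝ)| ≤
      1 / (((m : ℝ) ^ (((n : ℝ) - 1) / n) *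
        ∏ j ∈ Finset.Icc 1 (n - 1), |Real.sin (2 * Real.pi * (j : ℝ) / n)|) *
        (y : ℝ) ^ n) :=
  stmt_2_general n hodd m hm x y hy h
end

section
/- Let n ≥ 3 be an odd integer, let m ≥ 2 be an integer, let A > 0 be a real number, and let x, y be integers with y ≥ 1 satisfying x^n − m·y^n = 1 or x^n − m·y^n = −1. If in addition 1/((A+2)·y²) < |m^{1/n} − x/y|, then y^{n−2} < (A+2)/c₁, where c₁ = m^{(n−1)/n}·∏_{j=1}^{n−1} |sin(2πj/n)|. -/
/-! Write `α = m^{1/n}`. Since `n` is odd, a solution has `x ≥ 0`, so in the factorisation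
`x^n - (αy)^n = (x - αy) · ∑ xⁱ (αy)^{n-1-i}` every summand is nonnegative and the sum is at least
`(αy)^{n-1}`. Hence `α^{n-1} y^n |α - x/y| ≤ 1`, which against the assumed lower bound forces
`α^{n-1} y^{n-2} < A + 2`. Finally `α^{n-1} = m^{(n-1)/n}`, and the sine product lies in `(0, 1]`:
no factor vanishes because `n ∤ 2j` for `0 < j < n` when `n` is odd. -/

open Finset Real

theorem pow_pred_mul_abs_sub_le_abs_pow_sub_pow {R : Type*} [CommRing R] [LinearOrder R]
    [IsStrictOrderedRing R] {a b : R} (ha : 0 ≤ a) (hb : 0 ≤ b) {n : ℕ} (hn : n ≠ 0) :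
    b ^ (n - 1) * |a - b| ≤ |a ^ n - b ^ n| := by
  have hsum : b ^ (n - 1) ≤ ∑ i ∈ range n, a ^ i * b ^ (n - 1 - i) := by
    simpa using single_le_sum (f := fun i => a ^ i * b ^ (n - 1 - i))
      (fun i _ => by positivity) (mem_range.2 (Nat.pos_of_ne_zero hn))
  calc b ^ (n - 1) * |a - b| ≤ (∑ i ∈ range n, a ^ i * b ^ (n - 1 - i)) * |a - b| :=
        mul_le_mul_of_nonneg_right hsum (abs_nonneg _)
    _ = |a ^ n - b ^ n| := by
        rw [← geom_sum₂_mul, abs_mul, abs_of_nonneg (hsum.trans' (by positivity))]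

theorem pow_pred_mul_pow_mul_abs_sub_div_le {α x y : ℝ} (hα : 0 ≤ α) (hx : 0 ≤ x) (hy : 0 < y)
    {n : ℕ} (hn : n ≠ 0) : α ^ (n - 1) * y ^ n * |α - x / y| ≤ |x ^ n - α ^ n * y ^ n| := by
  have hfactor := pow_pred_mul_abs_sub_le_abs_pow_sub_pow hx (mul_nonneg hα hy.le) hn
  have hdiv : |α - x / y| = |x - α * y| / y := by
    rw [abs_sub_comm, ← abs_of_pos hy, ← abs_div, abs_of_pos hy, sub_div, mul_div_cancel_right₀ _ hy.ne']
  calc α ^ (n - 1) * y ^ n * |α - x / y| = (α * y) ^ (n - 1) * |x - α * y| := by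
        obtain ⟨k, rfl⟩ := Nat.exists_eq_succ_of_ne_zero hn
        rw [hdiv, Nat.succ_sub_one, mul_pow, pow_succ]
        field_simp
    _ ≤ |x ^ n - α ^ n * y ^ n| := by simpa only [mul_pow] using hfactor

theorem nonneg_of_abs_pow_sub_mul_pow_le_one {n : ℕ} (hodd : Odd n) {m x y : ℤ} (hm : 0 < m)
    (hy : 0 < y) (h : |x ^ n - m * y ^ n| ≤ 1) : 0 ≤ x := by
  rw [← hodd.pow_nonneg_iff]
  have := mul_pos hm (pow_pos hy n)
  linarith [(abs_le.1 h).1]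

theorem sin_two_pi_mul_div_ne_zero_s13 {n j : ℕ} (hodd : Odd n) (hj₀ : 0 < j) (hjn : j < n) :
    sin (2 * π * j / n) ≠ 0 := by
  rw [Ne, sin_eq_zero_iff]
  rintro ⟨k, hk⟩
  have hkn : (k : ℝ) * n = 2 * j := by
    have hn : (n : ℝ) ≠ 0 := by exact_mod_cast hodd.pos.ne'
    field_simp at hk
    rw [hk]
  have hkn' : k * n = 2 * j := by exact_mod_cast hkn
  have hdvd : n ∣ 2 * j := Int.natCast_dvd_natCast.1 ⟨k, by push_cast; linarith⟩
  have := Nat.le_of_dvd hj₀ (hodd.coprime_two_right.dvd_of_dvd_mul_left hdvd)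
  omega

theorem prod_abs_sin_le_one {ι : Type*} (s : Finset ι) (f : ι → ℝ) :
    ∏ i ∈ s, |sin (f i)| ≤ 1 :=
  prod_le_one (fun _ _ => abs_nonneg _) fun _ _ => abs_sin_le_one _

theorem prod_abs_sin_two_pi_mul_div_pos {n : ℕ} (hodd : Odd n) :
    0 < ∏ j ∈ Icc 1 (n - 1), |sin (2 * π * j / n)| :=
  prod_pos fun j hj => abs_pos.2 <| sin_two_pi_mul_div_ne_zero_s13 hodd
    (mem_Icc.1 hj).1 (by have := (mem_Icc.1 hj).2; have := hodd.pos; omega)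

theorem rpow_pred_div_eq_rpow_one_div_pow {x : ℝ} (hx : 0 ≤ x) {n : ℕ} (hn : n ≠ 0) :
    x ^ (((n : ℝ) - 1) / n) = (x ^ ((1 : ℝ) / n)) ^ (n - 1) := by
  rw [← rpow_natCast, ← rpow_mul hx, Nat.cast_pred (Nat.pos_of_ne_zero hn)]
  ring_nf

theorem mul_pow_sub_two_lt_of_one_div_lt {B c y δ : ℝ} {n : ℕ} (hn : 2 ≤ n) (hB : 0 < B)
    (hy : 0 < y) (hlow : 1 / (B * y ^ 2) < δ) (hup : c * y ^ n * δ ≤ 1) : c * y ^ (n - 2) < B := by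
  have hδ : 0 < δ := lt_trans (by positivity) hlow
  rw [div_lt_iff₀ (by positivity)] at hlow
  have hyn : y ^ n = y ^ (n - 2) * y ^ 2 := by rw [← pow_add, Nat.sub_add_cancel hn]
  have : c * y ^ (n - 2) * y ^ 2 * δ < B * y ^ 2 * δ := by rw [mul_assoc c, ← hyn]; linarith
  exact lt_of_mul_lt_mul_right (lt_of_mul_lt_mul_right this hδ.le) (by positivity)

/-- For an odd integer `n ≥ 3`, an integer `m ≥ 2`, a real
`A > 0`, and integers `x, y` with `y ≥ 1` satisfying `x^n − m·y^n = ±1`: if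
`1/((A+2)·y²) < |m^{1/n} − x/y|`, then `y^{n−2} < (A+2)/c₁`, where
`c₁ = m^{(n−1)/n}·∏_{j=1}^{n−1}|sin(2πj/n)|`. -/
theorem stmt_13 (n : ℕ) (hn : 3 ≤ n) (hodd : Odd n) (m : ℤ) (hm : 2 ≤ m)
    (A : ℝ) (hA : 0 < A) (x y : ℤ) (hy : 1 ≤ y)
    (h : x ^ n - m * y ^ n = 1 ∨ x ^ n - m * y ^ n = -1)
    (hlow : 1 / ((A + 2) * (y : ℝ) ^ 2) <
      |(m : ℝ) ^ ((1 : ℝ) / n) - (x : ℝ) / (y : ℝ)|) :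
    (y : ℝ) ^ (n - 2) < (A + 2) /
      ((m : ℝ) ^ (((n : ℝ) - 1) / n) *
        ∏ j ∈ Finset.Icc 1 (n - 1), |Real.sin (2 * Real.pi * (j : ℝ) / n)|) := by
  have hn0 : n ≠ 0 := by omega
  have hm0 : (0 : ℝ) < m := by exact_mod_cast (by omega : (0 : ℤ) < m)
  have hy0 : (0 : ℝ) < y := by exact_mod_cast (by omega : (0 : ℤ) < y)
  set α := (m : ℝ) ^ ((1 : ℝ) / n)
  have hαn : α ^ n = m := by simp only [α, one_div]; exact rpow_inv_natCast_pow hm0.le hn0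
  have hthue : |x ^ n - m * y ^ n| = 1 := by rcases h with h | h <;> simp [h]
  have hx : (0 : ℝ) ≤ x := by
    exact_mod_cast nonneg_of_abs_pow_sub_mul_pow_le_one hodd (by omega) (by omega) hthue.le
  have happrox : α ^ (n - 1) * (y : ℝ) ^ n * |α - x / y| ≤ 1 := by
    have := pow_pred_mul_pow_mul_abs_sub_div_le (α := α) (by positivity) hx hy0 hn0
    rwa [hαn, show |(x : ℝ) ^ n - m * y ^ n| = 1 by exact_mod_cast hthue] at this
  have hbound := mul_pow_sub_two_lt_of_one_div_lt (by omega) (by linarith) hy0 hlow happrox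
  rw [rpow_pred_div_eq_rpow_one_div_pow hm0.le hn0,
    lt_div_iff₀ (mul_pos (by positivity) (prod_abs_sin_two_pi_mul_div_pos hodd))]
  calc (y : ℝ) ^ (n - 2) * (α ^ (n - 1) * ∏ j ∈ Icc 1 (n - 1), |sin (2 * π * j / n)|)
      = α ^ (n - 1) * y ^ (n - 2) * ∏ j ∈ Icc 1 (n - 1), |sin (2 * π * j / n)| := by ring
    _ ≤ α ^ (n - 1) * y ^ (n - 2) := mul_le_of_le_one_right (by positivity) (prod_abs_sin_le_one _ _)
    _ < A + 2 := hbound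
end
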